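/- arXiv:1003.1111 — 4 statements merged into one kernel-verified Lean document; each statement's English description precedes it below -/
import Mathlib

section
/- Let X be a metric space, (g_k) a sequence of isometries of X converging (uniformly on bounded sets) to an isometry g, and (x_k) a sequence in X with x_k ∈ Min(g_k) for all k. Then every accumulation point of (x_k) lies in Min(g). In particular, if x_k → x then d(x, gx) = ℓ(g) and ℓ(g_k) → ℓ(g). -/
/-!
Since each `g k` is an isometry, `d(g k (x k), G p) ≤ d(x k, p) + d(g k p, G p)`,
so `x k → p` forces `d(x k, g k (x k)) → d(p, G p)`. The left side is `ℓ(g k) ≤ d(y, g k y) → d(y, G y)`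
for every `y`, hence `d(p, G p) ≤ d(y, G y)`, i.e. `p ∈ Min(G)`, and then
`ℓ(g k) → ℓ(G)`. An accumulation point is a limit along an ultrafilter finer than
`atTop`, which reduces the first claim to the second.
-/

open Filter

/-- The minimal set of a map `h` of a metric space:
points realizing the translation length `ℓ(h) = inf_y d(y, hy)`. -/
def MinSet {X : Type*} [MetricSpace X] (h : X → X) : Set X :=
  {p : X | dist p (h p) = ⨅ y : X, dist y (h y)}

open Topology

section

variable {X : Type*} [MetricSpace X] {ι : Type*} {l : Filter ι} {g : ι → X → X} {G : X → X}
  {x : ι → X} {p : X}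

theorem iInf_dist_apply_le (h : X → X) (y : X) : ⨅ z, dist z (h z) ≤ dist y (h y) :=
  ciInf_le ⟨0, by rintro _ ⟨z, rfl⟩; exact dist_nonneg⟩ y

theorem mem_minSet_iff {h : X → X} :
    p ∈ MinSet h ↔ ∀ y, dist p (h p) ≤ dist y (h y) :=
  have : Nonempty X := ⟨p⟩
  ⟨fun hp y => hp ▸ iInf_dist_apply_le h y,
    fun hp => le_antisymm (le_ciInf hp) (iInf_dist_apply_le h p)⟩

theorem tendsto_apply_apply_of_isometry (hg : ∀ k, Isometry (g k))
    (hgp : Tendsto (fun k => g k p) l (𝓝 (G p))) (hxp : Tendsto x l (𝓝 p)) :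
    Tendsto (fun k => g k (x k)) l (𝓝 (G p)) := by
  rw [tendsto_iff_dist_tendsto_zero] at hgp hxp ⊢
  refine squeeze_zero (fun k => dist_nonneg) (fun k => ?_) (by simpa using hxp.add hgp)
  calc dist (g k (x k)) (G p) ≤ dist (g k (x k)) (g k p) + dist (g k p) (G p) :=
        dist_triangle _ _ _
    _ = dist (x k) p + dist (g k p) (G p) := by rw [(hg k).dist_eq]

theorem tendsto_dist_apply_of_isometry (hg : ∀ k, Isometry (g k))
    (hgp : Tendsto (fun k => g k p) l (𝓝 (G p))) (hxp : Tendsto x l (𝓝 p)) :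
    Tendsto (fun k => dist (x k) (g k (x k))) l (𝓝 (dist p (G p))) :=
  hxp.dist (tendsto_apply_apply_of_isometry hg hgp hxp)

theorem mem_minSet_of_tendsto [l.NeBot] (hg : ∀ k, Isometry (g k))
    (hpt : ∀ y, Tendsto (fun k => g k y) l (𝓝 (G y))) (hx : ∀ k, x k ∈ MinSet (g k))
    (hxp : Tendsto x l (𝓝 p)) : p ∈ MinSet G :=
  mem_minSet_iff.2 fun y =>
    le_of_tendsto_of_tendsto' (tendsto_dist_apply_of_isometry hg (hpt p) hxp)
      (tendsto_const_nhds.dist (hpt y)) fun k => (hx k).le.trans (iInf_dist_apply_le _ y)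

theorem mem_minSet_of_mapClusterPt (hg : ∀ k, Isometry (g k))
    (hpt : ∀ y, Tendsto (fun k => g k y) l (𝓝 (G y))) (hx : ∀ k, x k ∈ MinSet (g k))
    (hxp : MapClusterPt p l x) : p ∈ MinSet G := by
  obtain ⟨U, hUl, hxU⟩ := mapClusterPt_iff_ultrafilter.1 hxp
  exact mem_minSet_of_tendsto hg (fun y => (hpt y).mono_left hUl) hx hxU

theorem tendsto_iInf_dist_apply (hg : ∀ k, Isometry (g k))
    (hgp : Tendsto (fun k => g k p) l (𝓝 (G p))) (hx : ∀ k, x k ∈ MinSet (g k))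
    (hp : p ∈ MinSet G) (hxp : Tendsto x l (𝓝 p)) :
    Tendsto (fun k => ⨅ y, dist y (g k y)) l (𝓝 (⨅ y, dist y (G y))) := by
  have hℓ : (fun k => ⨅ y, dist y (g k y)) = fun k => dist (x k) (g k (x k)) :=
    funext fun k => (hx k).symm
  rw [hℓ, ← hp]
  exact tendsto_dist_apply_of_isometry hg hgp hxp

end

theorem stmt2_general {X : Type*} [MetricSpace X]
    (g : ℕ → X → X) (hg : ∀ k, Isometry (g k)) (G : X → X)
    (hconv : ∀ s : Set X, Bornology.IsBounded s →
      TendstoUniformlyOn (fun k => g k) G atTop s)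
    (x : ℕ → X) (hx : ∀ k, x k ∈ MinSet (g k)) :
    (∀ p : X, MapClusterPt p atTop x → p ∈ MinSet G) ∧
    (∀ p : X, Tendsto x atTop (nhds p) →
      dist p (G p) = (⨅ y : X, dist y (G y)) ∧
      Tendsto (fun k => ⨅ y : X, dist y (g k y)) atTop (nhds (⨅ y : X, dist y (G y)))) := by
  have hpt : ∀ y, Tendsto (fun k => g k y) atTop (𝓝 (G y)) := fun y =>
    (hconv {y} Bornology.isBounded_singleton).tendsto_at (Set.mem_singleton y)
  refine ⟨fun p => mem_minSet_of_mapClusterPt hg hpt hx, fun p hxp => ?_⟩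
  have hp : p ∈ MinSet G := mem_minSet_of_tendsto hg hpt hx hxp
  exact ⟨hp, tendsto_iInf_dist_apply hg (hpt p) hx hp hxp⟩

/-- If isometries `g k` converge uniformly on bounded sets to an isometry `G` and
`x k ∈ Min(g k)` for all `k`, then every accumulation point of `(x k)` lies in
`Min(G)`; in particular if `x k → p` then `d(p, Gp) = ℓ(G)` and `ℓ(g k) → ℓ(G)`. -/
theorem stmt2 {X : Type*} [MetricSpace X] [Nonempty X]
    (g : ℕ → X → X) (hg : ∀ k, Isometry (g k)) (G : X → X) (hG : Isometry G)
    (hconv : ∀ s : Set X, Bornology.IsBounded s →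
      TendstoUniformlyOn (fun k => g k) G atTop s)
    (x : ℕ → X) (hx : ∀ k, x k ∈ MinSet (g k)) :
    (∀ p : X, MapClusterPt p atTop x → p ∈ MinSet G) ∧
    (∀ p : X, Tendsto x atTop (nhds p) →
      dist p (G p) = (⨅ y : X, dist y (G y)) ∧
      Tendsto (fun k => ⨅ y : X, dist y (g k y)) atTop (nhds (⨅ y : X, dist y (G y)))) :=
  stmt2_general g hg G hconv x hx
end

section
/- Let X be a complete CAT(0) space and g an isometry fixing two opposite boundary points ξ⁻, ξ⁺ ∈ ∂∞X. Let F = F_{ξ⁻ξ⁺} = C × ℝ be the union of geodesics from ξ⁻ to ξ⁺ with its canonical product decomposition, and write g = (g', t) on F. If t = ℓ(g) (equivalently t > 0 and ℓ(g') = 0), then for every x ∈ X one has g^k x → ξ⁺ and g^{−k} x → ξ⁻ in the cone topology as k → +∞; that is, ξ⁺ and ξ⁻ are the attractive and repulsive fixed points of g at infinity. -/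
open Filter
open scoped NNReal

/-- A geodesic metric space (existence of midpoints) satisfying the CN inequality
of Bruhat–Tits, an equivalent characterization of CAT(0). -/
structure IsCAT0 (X : Type*) [MetricSpace X] : Prop where
  midpoint : ∀ x y : X, ∃ m : X, dist x m = dist x y / 2 ∧ dist m y = dist x y / 2
  cn : ∀ x y z m : X, dist y m = dist y z / 2 → dist m z = dist y z / 2 →
    dist x m ^ 2 ≤ dist x y ^ 2 / 2 + dist x z ^ 2 / 2 - dist y z ^ 2 / 4

/-- Two geodesic rays are asymptotic if they stay at bounded distance. -/
def AsympRay {X : Type*} [MetricSpace X] (c c' : ℝ≥0 → X) : Prop :=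
  ∃ C : ℝ, ∀ t, dist (c t) (c' t) ≤ C

/-- A sequence converges, in the cone topology, to the boundary point of the ray `c`:
it sublinearly tracks points `c (s k)` with `s k → ∞`. -/
def ConvergesToRay {X : Type*} [MetricSpace X] (x : ℕ → X) (c : ℝ≥0 → X) : Prop :=
  ∃ s : ℕ → ℝ≥0, Tendsto s atTop atTop ∧
    Tendsto (fun k => dist (x k) (c (s k)) / (s k : ℝ)) atTop (nhds 0)

/-! The fibre line `s ↦ φ c₀ s` of the parallel set is asymptotic to `r` in both directions, and
`gᵏ` moves `φ c₀ 0` to `φ (g'ᵏ c₀) (k t)`, which lies within `d(c₀, g'ᵏ c₀)` of `φ c₀ (k t)`.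
Since `ℓ(g') = 0`, that displacement grows sublinearly, so the orbit `gᵏ x` tracks the ray
`r` at linear speed `t` with sublinear error, which is convergence to `ξ⁺` in the cone
topology. For `g⁻ᵏ` one applies `gᵏ` to compare with the same fibre line at height `-k t`. -/

open scoped Topology

section Isometry

variable {α : Type*} [PseudoMetricSpace α] {f : α → α}

theorem Isometry.iterate (hf : Isometry f) (k : ℕ) : Isometry f^[k] := by
  induction k with
  | zero => exact isometry_id
  | succ k ih => rw [Function.iterate_succ']; exact hf.comp ih

theorem Isometry.dist_iterate_self_le (hf : Isometry f) (y : α) (k : ℕ) :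
    dist y (f^[k] y) ≤ k * dist y (f y) := by
  calc dist y (f^[k] y) ≤ ∑ i ∈ Finset.range k, dist (f^[i] y) (f^[i + 1] y) :=
        dist_le_range_sum_dist (fun i => f^[i] y) k
    _ = ∑ _i ∈ Finset.range k, dist y (f y) := Finset.sum_congr rfl fun i _ => by
        rw [Function.iterate_succ_apply, (hf.iterate i).dist_eq]
    _ = k * dist y (f y) := by simp

theorem Isometry.dist_iterate_le (hf : Isometry f) (x y : α) (k : ℕ) :
    dist x (f^[k] x) ≤ 2 * dist x y + k * dist y (f y) := by
  calc dist x (f^[k] x) ≤ dist x y + dist y (f^[k] y) + dist (f^[k] y) (f^[k] x) :=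
        dist_triangle4 _ _ _ _
    _ ≤ dist x y + k * dist y (f y) + dist x y := by
        rw [(hf.iterate k).dist_eq, dist_comm y x]
        gcongr
        exact hf.dist_iterate_self_le y k
    _ = 2 * dist x y + k * dist y (f y) := by ring

theorem Isometry.tendsto_dist_iterate_div_atTop (hf : Isometry f)
    (h : ⨅ y, dist y (f y) = 0) (x : α) :
    Tendsto (fun k : ℕ => dist x (f^[k] x) / k) atTop (𝓝 0) := by
  have : Nonempty α := ⟨x⟩
  refine tendsto_order.2 ⟨fun ε hε => Eventually.of_forall fun k => hε.trans_le
    (div_nonneg dist_nonneg k.cast_nonneg), fun ε hε => ?_⟩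
  obtain ⟨y, hy⟩ : ∃ y, dist y (f y) < ε := exists_lt_of_ciInf_lt (h ▸ hε)
  have hbound : Tendsto (fun k : ℕ => 2 * dist x y / k + dist y (f y)) atTop
      (𝓝 (dist y (f y))) := by
    simpa using (tendsto_const_div_atTop_nhds_zero_nat (2 * dist x y)).add_const (dist y (f y))
  filter_upwards [hbound.eventually (gt_mem_nhds hy), eventually_gt_atTop 0] with k hk hk0
  refine lt_of_le_of_lt ?_ hk
  rw [div_add' _ _ _ (by positivity), div_le_div_iff_of_pos_right (by positivity)]
  exact (hf.dist_iterate_le x y k).trans_eq (by ring)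

end Isometry

section ConeConvergence

variable {X : Type*} [MetricSpace X] {x : ℕ → X} {c c' : ℝ≥0 → X}

theorem ConvergesToRay.of_asympRay (h : ConvergesToRay x c') (hc : AsympRay c' c) :
    ConvergesToRay x c := by
  obtain ⟨s, hs, hx⟩ := h
  obtain ⟨B, hB⟩ := hc
  have hbound : Tendsto (fun k => dist (x k) (c' (s k)) / s k + B / s k) atTop (𝓝 0) := by
    simpa using hx.add (tendsto_const_nhds.div_atTop (NNReal.tendsto_coe_atTop.2 hs))
  refine ⟨s, hs, squeeze_zero (fun k => div_nonneg dist_nonneg (s k).coe_nonneg)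
    (fun k => ?_) hbound⟩
  rw [← add_div]
  gcongr
  exact (dist_triangle _ _ _).trans (by gcongr; exact hB _)

theorem convergesToRay_of_dist_le_add {t : ℝ≥0} (ht : 0 < t) {a : ℕ → ℝ}
    (ha : Tendsto (fun k : ℕ => a k / k) atTop (𝓝 0)) (B : ℝ)
    (h : ∀ k : ℕ, dist (x k) (c (k * t)) ≤ B + a k) : ConvergesToRay x c := by
  refine ⟨fun k => k * t, tendsto_natCast_atTop_atTop.atTop_mul_const ht, ?_⟩
  have hbound : Tendsto (fun k : ℕ => (B / k + a k / k) / t) atTop (𝓝 0) := by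
    simpa using ((tendsto_const_div_atTop_nhds_zero_nat B).add ha).div_const (t : ℝ)
  refine squeeze_zero' (Eventually.of_forall fun k => by positivity) ?_ hbound
  filter_upwards [eventually_gt_atTop 0] with k hk
  rw [← add_div, div_div, NNReal.coe_mul, NNReal.coe_natCast]
  gcongr
  exact h k

end ConeConvergence

section ParallelSet

variable {X C : Type*} [MetricSpace X] {φ : C → ℝ → X} {g : X ≃ᵢ X}
  {g' : C → C} {t : ℝ}

theorem iterate_apply_of_forall_apply_eq (hg : ∀ c s, g (φ c s) = φ (g' c) (s + t))
    (k : ℕ) (c : C) (s : ℝ) : (⇑g)^[k] (φ c s) = φ (g'^[k] c) (s + k * t) := by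
  induction k generalizing s with
  | zero => simp
  | succ k ih =>
    rw [Function.iterate_succ_apply', ih, hg, Function.iterate_succ_apply']
    push_cast
    ring_nf

variable [MetricSpace C] (hφ : ∀ c c' s, dist (φ c s) (φ c' s) = dist c c')
  (hg : ∀ c s, g (φ c s) = φ (g' c) (s + t))
include hφ hg

theorem dist_iterate_apply_le_of_forall_apply_eq (x : X) (c : C) (k : ℕ) :
    dist ((⇑g)^[k] x) (φ c (k * t)) ≤ dist x (φ c 0) + dist c (g'^[k] c) := by
  calc dist ((⇑g)^[k] x) (φ c (k * t))
      ≤ dist ((⇑g)^[k] x) ((⇑g)^[k] (φ c 0)) + dist ((⇑g)^[k] (φ c 0)) (φ c (k * t)) :=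
        dist_triangle _ _ _
    _ = dist x (φ c 0) + dist c (g'^[k] c) := by
        rw [(g.isometry.iterate k).dist_eq, iterate_apply_of_forall_apply_eq hg, zero_add, hφ,
          dist_comm (g'^[k] c)]

theorem dist_symm_iterate_apply_le_of_forall_apply_eq (x : X) (c : C) (k : ℕ) :
    dist ((⇑g.symm)^[k] x) (φ c (-(k * t))) ≤ dist x (φ c 0) + dist c (g'^[k] c) := by
  calc dist ((⇑g.symm)^[k] x) (φ c (-(k * t)))
      = dist x (φ (g'^[k] c) 0) := by
        rw [← (g.isometry.iterate k).dist_eq, iterate_apply_of_forall_apply_eq hg, neg_add_cancel,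
          (Function.RightInverse.iterate g.apply_symm_apply k) x]
    _ ≤ dist x (φ c 0) + dist (φ c 0) (φ (g'^[k] c) 0) := dist_triangle _ _ _
    _ = dist x (φ c 0) + dist c (g'^[k] c) := by rw [hφ]

end ParallelSet

theorem stmt4_general {X : Type*} [MetricSpace X]
    {C : Type*} [MetricSpace C] [Nonempty C]
    (g : X ≃ᵢ X) (r : ℝ → X)
    (φ : C → ℝ → X)
    (hφ : ∀ c c' s s', dist (φ c s) (φ c' s') = Real.sqrt (dist c c' ^ 2 + (s - s') ^ 2))
    (hpar : ∀ c : C, AsympRay (fun u : ℝ≥0 => φ c (u : ℝ)) (fun u : ℝ≥0 => r (u : ℝ)) ∧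
      AsympRay (fun u : ℝ≥0 => φ c (-(u : ℝ))) (fun u : ℝ≥0 => r (-(u : ℝ))))
    (g' : C → C) (hg'iso : Isometry g') (t : ℝ)
    (hg : ∀ c s, g (φ c s) = φ (g' c) (s + t))
    (ht : 0 < t) (hg'0 : (⨅ c : C, dist c (g' c)) = 0) :
    ∀ x : X, ConvergesToRay (fun k => (⇑g)^[k] x) (fun u : ℝ≥0 => r (u : ℝ)) ∧
      ConvergesToRay (fun k => (⇑g.symm)^[k] x) (fun u : ℝ≥0 => r (-(u : ℝ))) := by
  intro x
  let c₀ : C := Classical.arbitrary C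
  have hfibre : ∀ c c' s, dist (φ c s) (φ c' s) = dist c c' := fun c c' s => by
    simp [hφ, Real.sqrt_sq dist_nonneg]
  have hsub := hg'iso.tendsto_dist_iterate_div_atTop hg'0 c₀
  lift t to ℝ≥0 using ht.le
  refine ⟨ConvergesToRay.of_asympRay ?_ (hpar c₀).1, ConvergesToRay.of_asympRay ?_ (hpar c₀).2⟩
  · refine convergesToRay_of_dist_le_add ht hsub (dist x (φ c₀ 0)) fun k => ?_
    simpa using dist_iterate_apply_le_of_forall_apply_eq hfibre hg x c₀ k
  · refine convergesToRay_of_dist_le_add ht hsub (dist x (φ c₀ 0)) fun k => ?_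
    simpa using dist_symm_iterate_apply_le_of_forall_apply_eq hfibre hg x c₀ k

/-- Let `g` be an isometry of a complete CAT(0) space fixing two opposite boundary
points `ξ⁻ = r(-∞)`, `ξ⁺ = r(+∞)`, and let `φ : C × ℝ ≃ F_{ξ⁻ξ⁺}` be the canonical
splitting of the parallel set, on which `g` acts as `(g', t)`. If `t > 0` and
`ℓ(g') = 0`, then for every `x`, `gᵏx → ξ⁺` and `g⁻ᵏx → ξ⁻` in the cone topology:
`ξ⁺` and `ξ⁻` are the attractive and repulsive fixed points of `g` at infinity. -/
theorem stmt4 {X : Type*} [MetricSpace X] [CompleteSpace X] (hX : IsCAT0 X)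
    {C : Type*} [MetricSpace C] [Nonempty C]
    (g : X ≃ᵢ X) (r : ℝ → X) (hr : Isometry r)
    (φ : C → ℝ → X)
    (hφ : ∀ c c' s s', dist (φ c s) (φ c' s') = Real.sqrt (dist c c' ^ 2 + (s - s') ^ 2))
    (hpar : ∀ c : C, AsympRay (fun u : ℝ≥0 => φ c (u : ℝ)) (fun u : ℝ≥0 => r (u : ℝ)) ∧
      AsympRay (fun u : ℝ≥0 => φ c (-(u : ℝ))) (fun u : ℝ≥0 => r (-(u : ℝ))))
    (g' : C → C) (hg'iso : Isometry g') (t : ℝ)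
    (hg : ∀ c s, g (φ c s) = φ (g' c) (s + t))
    (ht : 0 < t) (hg'0 : (⨅ c : C, dist c (g' c)) = 0) :
    ∀ x : X, ConvergesToRay (fun k => (⇑g)^[k] x) (fun u : ℝ≥0 => r (u : ℝ)) ∧
      ConvergesToRay (fun k => (⇑g.symm)^[k] x) (fun u : ℝ≥0 => r (-(u : ℝ))) :=
  stmt4_general g r φ hφ hpar g' hg'iso t hg ht hg'0
end

section
/- Let (K, |·|) be a valued field (archimedean or not), ω a non-principal ultrafilter on ℕ, and (λ_k) a sequence of reals in [1, ∞) tending to ∞. Define K_ω as the set of sequences (a_k) in K with |a_k|^{1/λ_k} bounded, modulo the relation lim_ω |a_k − b_k|^{1/λ_k} = 0, with componentwise operations. Then K_ω is a field, and |[a_k]|_ω := lim_ω |a_k|^{1/λ_k} is a well-defined ultrametric absolute value on K_ω which is trivial on the image of K embedded via constant sequences. -/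
/-!
Write `‖a‖_k = |a_k|^{1/λ_k}` (`scaledAbv`). It is multiplicative in `a`, and the triangle
inequality gives `‖a + b‖_k ≤ 2^{1/λ_k} max (‖a‖_k, ‖b‖_k)`. As `2^{1/λ_k} → 1` along `ω`, the
`ω`-limit of `‖a‖_k` is multiplicative and ultrametric, and, applied to `a = (a - b) + b`, depends
only on the class of `a` modulo null sequences. The null sequences form a maximal ideal of the ring
of bounded sequences: if the `ω`-limit `l` of `‖a‖_k` is positive, then `‖a‖_k > l / 2` for
`ω`-almost all `k`, and there the termwise inverse of `a` is defined and bounded by `2 / l`.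
-/

open Filter Topology

theorem Ideal.isMaximal_of_forall_exists_mul_sub_one_mem {R : Type*} [CommRing R] {I : Ideal R}
    (h1 : (1 : R) ∉ I) (hinv : ∀ x ∉ I, ∃ y, y * x - 1 ∈ I) : I.IsMaximal := by
  refine Ideal.isMaximal_iff.2 ⟨h1, fun J x hIJ hxI hxJ => ?_⟩
  obtain ⟨y, hy⟩ := hinv x hxI
  simpa using J.sub_mem (J.mul_mem_left y hxJ) (hIJ hy)

theorem Ultrafilter.exists_tendsto_of_isCompact {α X : Type*} [TopologicalSpace X]
    (ω : Ultrafilter α) {s : Set X} (hs : IsCompact s) {f : α → X} (hf : ∀ k, f k ∈ s) :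
    ∃ x ∈ s, Tendsto f ω (𝓝 x) :=
  hs.ultrafilter_le_nhds (ω.map f) (le_principal_iff.2 (mem_map.2 (univ_mem' hf)))

theorem tendsto_const_rpow_one_div_nhds_one {α : Type*} {l : Filter α} {lam : α → ℝ}
    (hlam : Tendsto lam l atTop) {c : ℝ} (hc : 0 < c) :
    Tendsto (fun k => c ^ (1 / lam k)) l (𝓝 1) := by
  have h0 : Tendsto (fun k => 1 / lam k) l (𝓝 0) :=
    hlam.inv_tendsto_atTop.congr fun k => (one_div (lam k)).symm
  simpa [Function.comp_def] using ((Real.continuous_const_rpow hc.ne').tendsto 0).comp h0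

namespace AsymptoticCone

variable {K : Type*} [Field K] (abv : AbsoluteValue K ℝ) (lam : ℕ → ℝ)

noncomputable def scaledAbv (a : ℕ → K) (k : ℕ) : ℝ := abv (a k) ^ (1 / lam k)

section Pointwise

variable {abv lam}

theorem scaledAbv_nonneg (a : ℕ → K) (k : ℕ) : 0 ≤ scaledAbv abv lam a k :=
  Real.rpow_nonneg (abv.nonneg _) _

theorem scaledAbv_eq_zero {a : ℕ → K} {k : ℕ} (hk : lam k ≠ 0) :
    scaledAbv abv lam a k = 0 ↔ a k = 0 := by
  rw [scaledAbv, Real.rpow_eq_zero (abv.nonneg _) (one_div_ne_zero hk), abv.eq_zero]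

theorem scaledAbv_one (k : ℕ) : scaledAbv abv lam 1 k = 1 := by
  simp [scaledAbv]

theorem scaledAbv_mul (a b : ℕ → K) (k : ℕ) :
    scaledAbv abv lam (a * b) k = scaledAbv abv lam a k * scaledAbv abv lam b k :=
  (congrArg (· ^ (1 / lam k)) (map_mul abv _ _)).trans
    (Real.mul_rpow (abv.nonneg _) (abv.nonneg _))

theorem scaledAbv_sub_comm (a b : ℕ → K) :
    scaledAbv abv lam (a - b) = scaledAbv abv lam (b - a) :=
  funext fun k => congrArg (· ^ (1 / lam k)) (abv.map_sub _ _)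

theorem scaledAbv_add_le {k : ℕ} (hk : 0 ≤ lam k) (a b : ℕ → K) :
    scaledAbv abv lam (a + b) k
      ≤ 2 ^ (1 / lam k) * max (scaledAbv abv lam a k) (scaledAbv abv lam b k) := by
  have ht : 0 ≤ 1 / lam k := one_div_nonneg.2 hk
  calc scaledAbv abv lam (a + b) k
      ≤ (2 * max (abv (a k)) (abv (b k))) ^ (1 / lam k) := by
        refine Real.rpow_le_rpow (abv.nonneg _) ((abv.add_le _ _).trans ?_) ht
        linarith [le_max_left (abv (a k)) (abv (b k)), le_max_right (abv (a k)) (abv (b k))]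
    _ = 2 ^ (1 / lam k) * max (scaledAbv abv lam a k) (scaledAbv abv lam b k) := by
        rw [Real.mul_rpow zero_le_two (le_max_of_le_left (abv.nonneg _)),
          Real.rpow_max (abv.nonneg _) (abv.nonneg _) ht]
        rfl

theorem scaledAbv_add_le_two_mul {k : ℕ} (hk : 1 ≤ lam k) (a b : ℕ → K) :
    scaledAbv abv lam (a + b) k ≤ 2 * max (scaledAbv abv lam a k) (scaledAbv abv lam b k) := by
  refine (scaledAbv_add_le (zero_le_one.trans hk) a b).trans
    (mul_le_mul_of_nonneg_right ?_ (le_max_of_le_left (scaledAbv_nonneg a k)))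
  simpa using Real.rpow_le_rpow_of_exponent_le one_le_two
    ((div_le_one (zero_lt_one.trans_le hk)).2 hk)

theorem scaledAbv_const_le {k : ℕ} (hk : 1 ≤ lam k) (c : K) :
    scaledAbv abv lam (fun _ => c) k ≤ max (abv c) 1 :=
  calc abv c ^ (1 / lam k) ≤ max (abv c) 1 ^ (1 / lam k) :=
        Real.rpow_le_rpow (abv.nonneg c) (le_max_left _ _)
          (one_div_nonneg.2 (zero_le_one.trans hk))
    _ ≤ max (abv c) 1 :=
        Real.rpow_le_self_of_one_le (le_max_right _ _)
          ((div_le_one (zero_lt_one.trans_le hk)).2 hk)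

end Pointwise

theorem le_max_of_tendsto_scaledAbv_add {l : Filter ℕ} [l.NeBot] (hlam : Tendsto lam l atTop)
    (hlam0 : ∀ k, 0 ≤ lam k) {a b : ℕ → K} {x y z : ℝ}
    (ha : Tendsto (scaledAbv abv lam a) l (𝓝 x)) (hb : Tendsto (scaledAbv abv lam b) l (𝓝 y))
    (hab : Tendsto (scaledAbv abv lam (a + b)) l (𝓝 z)) : z ≤ max x y := by
  have hbound := (tendsto_const_rpow_one_div_nhds_one hlam two_pos).mul (ha.max hb)
  rw [one_mul] at hbound
  exact le_of_tendsto_of_tendsto' hab hbound fun k => scaledAbv_add_le (hlam0 k) a b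

theorem le_of_tendsto_scaledAbv_sub {l : Filter ℕ} [l.NeBot] (hlam : Tendsto lam l atTop)
    (hlam0 : ∀ k, 0 ≤ lam k) {a b : ℕ → K} {x y : ℝ}
    (hab : Tendsto (scaledAbv abv lam (a - b)) l (𝓝 0))
    (ha : Tendsto (scaledAbv abv lam a) l (𝓝 x)) (hb : Tendsto (scaledAbv abv lam b) l (𝓝 y))
    (hy : 0 ≤ y) : x ≤ y := by
  have := le_max_of_tendsto_scaledAbv_add abv lam hlam hlam0 hab hb (by rwa [sub_add_cancel])
  rwa [max_eq_right hy] at this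

variable (hlam1 : ∀ k, 1 ≤ lam k)

noncomputable def boundedSeq : Subring (ℕ → K) where
  carrier := {a | ∃ M, ∀ k, scaledAbv abv lam a k ≤ M}
  zero_mem' := ⟨0, fun k => ((scaledAbv_eq_zero (zero_lt_one.trans_le (hlam1 k)).ne').2 rfl).le⟩
  one_mem' := ⟨1, fun k => (scaledAbv_one k).le⟩
  add_mem' := by
    rintro a b ⟨A, hA⟩ ⟨B, hB⟩
    exact ⟨2 * max A B, fun k => (scaledAbv_add_le_two_mul (hlam1 k) a b).trans
      (by gcongr <;> [exact hA k; exact hB k])⟩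
  mul_mem' := by
    rintro a b ⟨A, hA⟩ ⟨B, hB⟩
    refine ⟨A * B, fun k => ?_⟩
    rw [scaledAbv_mul]
    exact mul_le_mul (hA k) (hB k) (scaledAbv_nonneg b k) ((scaledAbv_nonneg a k).trans (hA k))
  neg_mem' := by
    rintro a ⟨A, hA⟩
    exact ⟨A, fun k => by simpa [scaledAbv] using hA k⟩

theorem const_mem_boundedSeq (c : K) : (fun _ => c) ∈ boundedSeq abv lam hlam1 :=
  ⟨_, fun k => scaledAbv_const_le (hlam1 k) c⟩

noncomputable def nullIdeal (l : Filter ℕ) : Ideal (boundedSeq abv lam hlam1) where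
  carrier := {a | Tendsto (scaledAbv abv lam a) l (𝓝 0)}
  zero_mem' := tendsto_const_nhds.congr fun k =>
    ((scaledAbv_eq_zero (zero_lt_one.trans_le (hlam1 k)).ne').2 rfl).symm
  add_mem' := by
    rintro a b (ha : Tendsto _ _ _) (hb : Tendsto _ _ _)
    refine squeeze_zero (scaledAbv_nonneg _)
      (fun k => scaledAbv_add_le_two_mul (hlam1 k) (a : ℕ → K) b) ?_
    simpa using (ha.max hb).const_mul 2
  smul_mem' := by
    rintro ⟨c, C, hC⟩ a (ha : Tendsto _ _ _)
    refine squeeze_zero (scaledAbv_nonneg _) (fun k => ?_) (by simpa using ha.const_mul C)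
    exact (scaledAbv_mul c a k).trans_le
      (mul_le_mul_of_nonneg_right (hC k) (scaledAbv_nonneg _ k))

theorem exists_tendsto_scaledAbv (ω : Ultrafilter ℕ) (a : boundedSeq abv lam hlam1) :
    ∃ x, 0 ≤ x ∧ Tendsto (scaledAbv abv lam a) ω (𝓝 x) := by
  obtain ⟨M, hM⟩ := a.2
  obtain ⟨x, hx, hlim⟩ := ω.exists_tendsto_of_isCompact (isCompact_Icc (a := 0) (b := M))
    fun k => ⟨scaledAbv_nonneg _ k, hM k⟩
  exact ⟨x, hx.1, hlim⟩

theorem exists_mul_sub_one_mem_nullIdeal (ω : Ultrafilter ℕ) {a : boundedSeq abv lam hlam1}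
    (ha : a ∉ nullIdeal abv lam hlam1 ω) : ∃ b, b * a - 1 ∈ nullIdeal abv lam hlam1 ω := by
  obtain ⟨x, hx0, hx⟩ := exists_tendsto_scaledAbv abv lam hlam1 ω a
  have hx_pos : 0 < x := hx0.lt_of_ne fun h => ha (show Tendsto _ _ _ from h ▸ hx)
  let S := {k | x / 2 < scaledAbv abv lam a k}
  have hS : S ∈ ω := hx (Ioi_mem_nhds (half_lt_self hx_pos))
  have hlam0 : ∀ k, lam k ≠ 0 := fun k => (zero_lt_one.trans_le (hlam1 k)).ne'
  have ha_ne : ∀ k ∈ S, (a : ℕ → K) k ≠ 0 := fun k hk h0 => by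
    change x / 2 < scaledAbv abv lam a k at hk
    rw [(scaledAbv_eq_zero (hlam0 k)).2 h0] at hk
    linarith
  let b : ℕ → K := S.indicator (a : ℕ → K)⁻¹
  have hb : b ∈ boundedSeq abv lam hlam1 := by
    refine ⟨(x / 2)⁻¹, fun k => ?_⟩
    by_cases hk : k ∈ S
    · show abv (b k) ^ (1 / lam k) ≤ _
      rw [show b k = ((a : ℕ → K) k)⁻¹ from Set.indicator_of_mem hk _, map_inv₀,
        Real.inv_rpow (abv.nonneg _)]
      exact inv_anti₀ (half_pos hx_pos) hk.le
    · rw [(scaledAbv_eq_zero (hlam0 k)).2 (Set.indicator_of_notMem hk _)]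
      positivity
  refine ⟨⟨b, hb⟩, tendsto_const_nhds.congr' ?_⟩
  filter_upwards [hS] with k hk
  have : b k * (a : ℕ → K) k - 1 = 0 := by
    simp [b, Set.indicator_of_mem hk, inv_mul_cancel₀ (ha_ne k hk)]
  exact ((scaledAbv_eq_zero (hlam0 k)).2 this).symm

theorem nullIdeal_isMaximal (ω : Ultrafilter ℕ) : (nullIdeal abv lam hlam1 ω).IsMaximal := by
  refine Ideal.isMaximal_of_forall_exists_mul_sub_one_mem (fun h1 => ?_)
    fun a ha => exists_mul_sub_one_mem_nullIdeal abv lam hlam1 ω ha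
  have : Tendsto (fun _ => (1 : ℝ)) ω (𝓝 0) := (show Tendsto _ _ _ from h1).congr scaledAbv_one
  exact one_ne_zero (tendsto_nhds_unique tendsto_const_nhds this)

abbrev Cone (l : Filter ℕ) : Type _ := boundedSeq abv lam hlam1 ⧸ nullIdeal abv lam hlam1 l

variable (ω : Ultrafilter ℕ)

-- unbounded sequences have no class in the cone and are sent to `0`
noncomputable def toCone (a : ℕ → K) : Cone abv lam hlam1 ω :=
  open Classical in if h : a ∈ boundedSeq abv lam hlam1 then Ideal.Quotient.mk _ ⟨a, h⟩ else 0

noncomputable def coneAbv (x : Cone abv lam hlam1 ω) : ℝ :=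
  limUnder ω
    (scaledAbv abv lam (Function.surjInv Ideal.Quotient.mk_surjective x : boundedSeq abv lam hlam1))

variable {abv lam hlam1 ω}

theorem toCone_of_mem {a : ℕ → K} (ha : a ∈ boundedSeq abv lam hlam1) :
    toCone abv lam hlam1 ω a = Ideal.Quotient.mk _ ⟨a, ha⟩ := by
  simp [toCone, ha]

theorem exists_toCone_eq (x : Cone abv lam hlam1 ω) :
    ∃ a ∈ boundedSeq abv lam hlam1, toCone abv lam hlam1 ω a = x := by
  obtain ⟨a, rfl⟩ := Ideal.Quotient.mk_surjective x
  exact ⟨a, a.2, toCone_of_mem a.2⟩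

theorem toCone_eq_toCone_iff {a b : ℕ → K} (ha : a ∈ boundedSeq abv lam hlam1)
    (hb : b ∈ boundedSeq abv lam hlam1) :
    toCone abv lam hlam1 ω a = toCone abv lam hlam1 ω b ↔
      Tendsto (scaledAbv abv lam (a - b)) ω (𝓝 0) := by
  rw [toCone_of_mem ha, toCone_of_mem hb, Ideal.Quotient.eq]
  rfl

theorem toCone_add {a b : ℕ → K} (ha : a ∈ boundedSeq abv lam hlam1)
    (hb : b ∈ boundedSeq abv lam hlam1) :
    toCone abv lam hlam1 ω (a + b) = toCone abv lam hlam1 ω a + toCone abv lam hlam1 ω b := by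
  rw [toCone_of_mem (add_mem ha hb), toCone_of_mem ha, toCone_of_mem hb, ← map_add]
  rfl

theorem toCone_mul {a b : ℕ → K} (ha : a ∈ boundedSeq abv lam hlam1)
    (hb : b ∈ boundedSeq abv lam hlam1) :
    toCone abv lam hlam1 ω (a * b) = toCone abv lam hlam1 ω a * toCone abv lam hlam1 ω b := by
  rw [toCone_of_mem (mul_mem ha hb), toCone_of_mem ha, toCone_of_mem hb, ← map_mul]
  rfl

theorem toCone_zero : toCone abv lam hlam1 ω 0 = 0 := by
  rw [toCone_of_mem (zero_mem _), ← map_zero (Ideal.Quotient.mk _)]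
  rfl

theorem toCone_one : toCone abv lam hlam1 ω 1 = 1 := by
  rw [toCone_of_mem (one_mem _), ← map_one (Ideal.Quotient.mk _)]
  rfl

variable (hlam : Tendsto lam ω atTop)
include hlam

theorem tendsto_scaledAbv_coneAbv (a : boundedSeq abv lam hlam1) :
    Tendsto (scaledAbv abv lam a) ω (𝓝 (coneAbv abv lam hlam1 ω (Ideal.Quotient.mk _ a))) := by
  set r := Function.surjInv Ideal.Quotient.mk_surjective
    (Ideal.Quotient.mk (nullIdeal abv lam hlam1 ω) a)
  have hra : r - a ∈ nullIdeal abv lam hlam1 ω :=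
    Ideal.Quotient.eq.1 (Function.surjInv_eq Ideal.Quotient.mk_surjective _)
  obtain ⟨x, hx0, hx⟩ := exists_tendsto_scaledAbv abv lam hlam1 ω a
  obtain ⟨y, hy0, hy⟩ := exists_tendsto_scaledAbv abv lam hlam1 ω r
  have hlam0 : ∀ k, 0 ≤ lam k := fun k => zero_le_one.trans (hlam1 k)
  have hyx : y ≤ x := le_of_tendsto_scaledAbv_sub abv lam hlam hlam0 hra hy hx hx0
  have hxy : x ≤ y := le_of_tendsto_scaledAbv_sub abv lam hlam hlam0
    (by rwa [scaledAbv_sub_comm]) hx hy hy0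
  rwa [coneAbv, hy.limUnder_eq, le_antisymm hyx hxy]

theorem tendsto_scaledAbv_coneAbv_toCone {a : ℕ → K}
    (ha : a ∈ boundedSeq abv lam hlam1) :
    Tendsto (scaledAbv abv lam a) ω (𝓝 (coneAbv abv lam hlam1 ω (toCone abv lam hlam1 ω a))) := by
  rw [toCone_of_mem ha]
  exact tendsto_scaledAbv_coneAbv hlam ⟨a, ha⟩

theorem coneAbv_nonneg (x : Cone abv lam hlam1 ω) : 0 ≤ coneAbv abv lam hlam1 ω x := by
  obtain ⟨a, rfl⟩ := Ideal.Quotient.mk_surjective x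
  exact ge_of_tendsto' (tendsto_scaledAbv_coneAbv hlam a) (scaledAbv_nonneg _)

theorem coneAbv_eq_zero (x : Cone abv lam hlam1 ω) : coneAbv abv lam hlam1 ω x = 0 ↔ x = 0 := by
  obtain ⟨a, rfl⟩ := Ideal.Quotient.mk_surjective x
  rw [Ideal.Quotient.eq_zero_iff_mem]
  exact ⟨fun h => show Tendsto _ _ _ from h ▸ tendsto_scaledAbv_coneAbv hlam a,
    fun h => tendsto_nhds_unique (tendsto_scaledAbv_coneAbv hlam a) h⟩

theorem coneAbv_mul (x y : Cone abv lam hlam1 ω) :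
    coneAbv abv lam hlam1 ω (x * y) = coneAbv abv lam hlam1 ω x * coneAbv abv lam hlam1 ω y := by
  obtain ⟨a, rfl⟩ := Ideal.Quotient.mk_surjective x
  obtain ⟨b, rfl⟩ := Ideal.Quotient.mk_surjective y
  rw [← map_mul]
  exact tendsto_nhds_unique ((tendsto_scaledAbv_coneAbv hlam (a * b)).congr (scaledAbv_mul _ _))
    ((tendsto_scaledAbv_coneAbv hlam a).mul (tendsto_scaledAbv_coneAbv hlam b))

theorem coneAbv_add_le (x y : Cone abv lam hlam1 ω) :
    coneAbv abv lam hlam1 ω (x + y)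
      ≤ max (coneAbv abv lam hlam1 ω x) (coneAbv abv lam hlam1 ω y) := by
  obtain ⟨a, rfl⟩ := Ideal.Quotient.mk_surjective x
  obtain ⟨b, rfl⟩ := Ideal.Quotient.mk_surjective y
  rw [← map_add]
  exact le_max_of_tendsto_scaledAbv_add abv lam hlam (fun k => zero_le_one.trans (hlam1 k))
    (tendsto_scaledAbv_coneAbv hlam a) (tendsto_scaledAbv_coneAbv hlam b)
    (tendsto_scaledAbv_coneAbv hlam (a + b))

theorem coneAbv_toCone_const {c : K} (hc : c ≠ 0) :
    coneAbv abv lam hlam1 ω (toCone abv lam hlam1 ω fun _ => c) = 1 :=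
  tendsto_nhds_unique (tendsto_scaledAbv_coneAbv_toCone hlam (const_mem_boundedSeq abv lam hlam1 c))
    (tendsto_const_rpow_one_div_nhds_one hlam (abv.pos hc))

end AsymptoticCone

open AsymptoticCone in
/-- The asymptotic cone of a valued field `(K, |·|)` along a non-principal
ultrafilter `ω` and scalars `λ_k → ∞`: the bounded sequences (those with
`|a k| ^ (1/λ k)` bounded), modulo `lim_ω |a k - b k| ^ (1/λ k) = 0`, form a
field `L` carrying an ultrametric absolute value
`v_ω [a] = lim_ω |a k| ^ (1/λ k)`, which is trivial on the image of `K`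
embedded via constant sequences. -/
theorem stmt9 {K : Type u} [Field K] (abv : AbsoluteValue K ℝ)
    (ω : Ultrafilter ℕ) (hω : (ω : Filter ℕ) ≤ (Filter.cofinite : Filter ℕ))
    (lam : ℕ → ℝ) (hlam1 : ∀ k, 1 ≤ lam k) (hlam : Tendsto lam atTop atTop) :
    ∃ (L : Type u) (_ : Field L) (π : (ℕ → K) → L) (vω : L → ℝ),
      (∀ x : L, ∃ a : ℕ → K, (∃ M : ℝ, ∀ k, abv (a k) ^ (1 / lam k) ≤ M) ∧ π a = x) ∧
      (∀ a b : ℕ → K, (∃ M : ℝ, ∀ k, abv (a k) ^ (1 / lam k) ≤ M) →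
        (∃ M : ℝ, ∀ k, abv (b k) ^ (1 / lam k) ≤ M) →
        (π a = π b ↔
          Tendsto (fun k => abv (a k - b k) ^ (1 / lam k)) (ω : Filter ℕ) (nhds 0))) ∧
      (∀ a b : ℕ → K, (∃ M : ℝ, ∀ k, abv (a k) ^ (1 / lam k) ≤ M) →
        (∃ M : ℝ, ∀ k, abv (b k) ^ (1 / lam k) ≤ M) →
        π (fun k => a k + b k) = π a + π b ∧ π (fun k => a k * b k) = π a * π b) ∧
      π (fun _ => 0) = 0 ∧ π (fun _ => 1) = 1 ∧
      (∀ a : ℕ → K, (∃ M : ℝ, ∀ k, abv (a k) ^ (1 / lam k) ≤ M) →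
        Tendsto (fun k => abv (a k) ^ (1 / lam k)) (ω : Filter ℕ) (nhds (vω (π a)))) ∧
      (∀ x : L, 0 ≤ vω x) ∧
      (∀ x : L, vω x = 0 ↔ x = 0) ∧
      (∀ x y : L, vω (x * y) = vω x * vω y) ∧
      (∀ x y : L, vω (x + y) ≤ max (vω x) (vω y)) ∧
      (∀ c : K, c ≠ 0 → vω (π (fun _ => c)) = 1) := by
  have hlamω : Tendsto lam ω atTop := hlam.mono_left (hω.trans_eq Nat.cofinite_eq_atTop)
  have := nullIdeal_isMaximal abv lam hlam1 ω
  exact ⟨Cone abv lam hlam1 ω, Ideal.Quotient.field _, toCone abv lam hlam1 ω,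
    coneAbv abv lam hlam1 ω, exists_toCone_eq, fun a b => toCone_eq_toCone_iff,
    fun a b ha hb => ⟨toCone_add ha hb, toCone_mul ha hb⟩, toCone_zero, toCone_one,
    fun a => tendsto_scaledAbv_coneAbv_toCone hlamω, coneAbv_nonneg hlamω, coneAbv_eq_zero hlamω,
    coneAbv_mul hlamω, coneAbv_add_le hlamω, fun c => coneAbv_toCone_const hlamω⟩
end

section
/- Let V = K^n over a valued field K, ν₀ a fixed norm on V, N₀ the associated operator norm, and d_∞(ν,ν') = sup_{v≠0}|log(ν'(v)/ν(v))| the sup-metric on norms. For any norm ν on V with d_∞(ν₀, ν) < ∞ and any g ∈ GL_n(K), one has d_∞(ν, g·ν) ≤ log(1 + e^{2 d_∞(ν₀, ν)} · max{N₀(g − id), N₀(g⁻¹ − id)}), where g·ν = ν ∘ g⁻¹. -/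
/-- Let `ν₀`, `ν` be norms on `V = Kⁿ` over a valued field `K`, with
`d_∞(ν₀, ν) ≤ D₀ < ∞` and `max (N₀(g - id)) (N₀(g⁻¹ - id)) ≤ M` for the operator
norm `N₀` associated with `ν₀`. Then
`d_∞(ν, g·ν) ≤ log (1 + e^{2 D₀} · M)`, where `(g·ν)(v) = ν(g⁻¹ v)` (stated
pointwise over all finite bounds `D₀`, `M`, which is equivalent to the statement
with suprema in `[0, ∞]`). -/
theorem stmt14 {K : Type*} [NormedField K] {n : ℕ}
    (ν₀ ν : (Fin n → K) → ℝ)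
    (hν₀h : ∀ (a : K) (v : Fin n → K), ν₀ (a • v) = ‖a‖ * ν₀ v)
    (hν₀t : ∀ v w : Fin n → K, ν₀ (v + w) ≤ ν₀ v + ν₀ w)
    (hν₀p : ∀ v : Fin n → K, v ≠ 0 → 0 < ν₀ v)
    (hνh : ∀ (a : K) (v : Fin n → K), ν (a • v) = ‖a‖ * ν v)
    (hνt : ∀ v w : Fin n → K, ν (v + w) ≤ ν v + ν w)
    (hνp : ∀ v : Fin n → K, v ≠ 0 → 0 < ν v)
    (g : (Fin n → K) ≃ₗ[K] (Fin n → K))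
    (D₀ M : ℝ) (hM0 : 0 ≤ M)
    (hD₀ : ∀ v : Fin n → K, v ≠ 0 → |Real.log (ν v / ν₀ v)| ≤ D₀)
    (hM1 : ∀ v : Fin n → K, ν₀ (g v - v) ≤ M * ν₀ v)
    (hM2 : ∀ v : Fin n → K, ν₀ (g.symm v - v) ≤ M * ν₀ v) :
    ∀ v : Fin n → K, v ≠ 0 →
      |Real.log (ν (g.symm v) / ν v)| ≤ Real.log (1 + Real.exp (2 * D₀) * M) := by
  intro v hv
  have hν0 : ν 0 = 0 := by
    have := hνh 0 0; simpa using this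
  have hν₀0 : ν₀ 0 = 0 := by
    have := hν₀h 0 0; simpa using this
  -- comparisons between ν and ν₀, valid for all w
  have hup : ∀ w : Fin n → K, ν w ≤ Real.exp D₀ * ν₀ w := by
    intro w
    by_cases hw : w = 0
    · simp [hw, hν0, hν₀0]
    · have h1 := (abs_le.mp (hD₀ w hw)).2
      have hpos : 0 < ν w / ν₀ w := div_pos (hνp w hw) (hν₀p w hw)
      have := Real.log_le_iff_le_exp hpos |>.mp h1
      calc ν w = (ν w / ν₀ w) * ν₀ w := by
            rw [div_mul_cancel₀ _ (hν₀p w hw).ne']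
        _ ≤ Real.exp D₀ * ν₀ w := by
            exact mul_le_mul_of_nonneg_right this (hν₀p w hw).le
  have hdn : ∀ w : Fin n → K, ν₀ w ≤ Real.exp D₀ * ν w := by
    intro w
    by_cases hw : w = 0
    · simp [hw, hν0, hν₀0]
    · have h1 := (abs_le.mp (hD₀ w hw)).1
      have hpos : 0 < ν w / ν₀ w := div_pos (hνp w hw) (hν₀p w hw)
      have h2 : Real.exp (-D₀) ≤ ν w / ν₀ w := by
        have := Real.exp_le_exp.mpr h1
        rwa [Real.exp_log hpos] at this
      have h3 : Real.exp (-D₀) * ν₀ w ≤ ν w := by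
        calc Real.exp (-D₀) * ν₀ w ≤ (ν w / ν₀ w) * ν₀ w :=
              mul_le_mul_of_nonneg_right h2 (hν₀p w hw).le
          _ = ν w := div_mul_cancel₀ _ (hν₀p w hw).ne'
      calc ν₀ w = Real.exp D₀ * (Real.exp (-D₀) * ν₀ w) := by
            rw [← mul_assoc, ← Real.exp_add]; simp
        _ ≤ Real.exp D₀ * ν w :=
            mul_le_mul_of_nonneg_left h3 (Real.exp_pos D₀).le
  set C : ℝ := 1 + Real.exp (2 * D₀) * M with hC
  have hD₀0 : 0 ≤ D₀ := le_trans (abs_nonneg _) (hD₀ v hv)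
  have hC1 : 1 ≤ C := by
    have : 0 ≤ Real.exp (2 * D₀) * M := mul_nonneg (Real.exp_pos _).le hM0
    linarith
  have hCpos : 0 < C := lt_of_lt_of_le one_pos hC1
  have hgv : g.symm v ≠ 0 := by
    intro h
    apply hv
    have := congrArg g h
    simpa using this
  -- key bound used in both directions
  have key : ∀ a b : Fin n → K, ν₀ (a - b) ≤ M * ν₀ b → ν a ≤ C * ν b := by
    intro a b hab
    have h1 : ν a ≤ ν b + ν (a - b) := by
      have := hνt b (a - b)
      simpa using this
    have h2 : ν (a - b) ≤ Real.exp D₀ * ν₀ (a - b) := hup _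
    have h3 : ν₀ (a - b) ≤ M * ν₀ b := hab
    have h4 : ν₀ b ≤ Real.exp D₀ * ν b := hdn b
    have h5 : ν (a - b) ≤ Real.exp D₀ * (M * (Real.exp D₀ * ν b)) := by
      calc ν (a - b) ≤ Real.exp D₀ * ν₀ (a - b) := h2
        _ ≤ Real.exp D₀ * (M * ν₀ b) :=
            mul_le_mul_of_nonneg_left h3 (Real.exp_pos _).le
        _ ≤ Real.exp D₀ * (M * (Real.exp D₀ * ν b)) := by
            apply mul_le_mul_of_nonneg_left _ (Real.exp_pos _).le
            exact mul_le_mul_of_nonneg_left h4 hM0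
    have hexp : Real.exp D₀ * (M * (Real.exp D₀ * ν b)) = Real.exp (2 * D₀) * M * ν b := by
      rw [two_mul, Real.exp_add]; ring
    rw [hexp] at h5
    calc ν a ≤ ν b + ν (a - b) := h1
      _ ≤ ν b + Real.exp (2 * D₀) * M * ν b := by linarith
      _ = C * ν b := by rw [hC]; ring
  have h1 : ν (g.symm v) ≤ C * ν v := by
    apply key
    have := hM2 v
    simpa using this
  have h2 : ν v ≤ C * ν (g.symm v) := by
    apply key
    have := hM1 (g.symm v)
    simpa using this
  have hνv := hνp v hv
  have hνgv := hνp _ hgv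
  rw [abs_le]
  constructor
  · have : Real.log (ν v / ν (g.symm v)) ≤ Real.log C := by
      apply Real.log_le_log (div_pos hνv hνgv)
      rw [div_le_iff₀ hνgv]; linarith [h2]
    have hinv : Real.log (ν v / ν (g.symm v)) = - Real.log (ν (g.symm v) / ν v) := by
      rw [← Real.log_inv]; congr 1; field_simp
    linarith [hinv ▸ this]
  · apply Real.log_le_log (div_pos hνgv hνv)
    rw [div_le_iff₀ hνv]; linarith [h1]
end
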